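/- Let 1 < q < p < ∞ and X = f_{p,q} over dyadic rectangles. For nonzero x with ‖x‖ = 1 and any dyadic rectangle I, dist(x, span{e_I}) ≤ 1 − p^{−1}|F_x(e_I)|^{q'}, where q' is the conjugate exponent of q. -/

import Mathlib

open MeasureTheory

/-- A dyadic rectangle `I = I₁ × … × I_d ⊆ [0,1]^d`, where
`I_i = 2^{-j_i}(k_i + [0,1))` with `k_i < 2^{j_i}`. -/
structure DyadicRect (d : ℕ) where
  j : Fin d → ℕ
  k : Fin d → ℕ
  hk : ∀ i, k i < 2 ^ j i

namespace DyadicRect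

/-- The rectangle as a subset of `ℝ^d`. -/
def toSet {d : ℕ} (I : DyadicRect d) : Set (Fin d → ℝ) :=
  {u | ∀ i, (I.k i : ℝ) / 2 ^ I.j i ≤ u i ∧ u i < ((I.k i : ℝ) + 1) / 2 ^ I.j i}

/-- The volume `|I| = ∏ 2^{-j_i}`. -/
noncomputable def vol {d : ℕ} (I : DyadicRect d) : ℝ := ∏ i, ((2 : ℝ) ^ I.j i)⁻¹

/-- The `L^p`-normalized indicator `𝟙_{I,p} = |I|^{-1/p} 𝟙_I`. -/
noncomputable def indp {d : ℕ} (p : ℝ) (I : DyadicRect d) (u : Fin d → ℝ) : ℝ :=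
  I.vol ^ (-(1 / p)) * I.toSet.indicator (fun _ => (1 : ℝ)) u

end DyadicRect

/-- The square-type function `S_q x (u) = (Σ_I |x_I 𝟙_{I,p}(u)|^q)^{1/q}`. -/
noncomputable def Sq {d : ℕ} {𝕜 : Type*} [RCLike 𝕜] (p q : ℝ)
    (x : DyadicRect d → 𝕜) (u : Fin d → ℝ) : ℝ :=
  (∑' I, (‖x I‖ * DyadicRect.indp p I u) ^ q) ^ (1 / q)

/-- The `f_{p,q}` norm `‖x‖ = ‖S_q x‖_{L^p}`. -/
noncomputable def fpqNorm {d : ℕ} {𝕜 : Type*} [RCLike 𝕜] (p q : ℝ)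
    (x : DyadicRect d → 𝕜) : ℝ :=
  (∫ u, Sq p q x u ^ p) ^ (1 / p)

private lemma aux_rpow_sub (a b r : ℝ) (hb : 0 ≤ b) (hba : b ≤ a) (hr : 1 ≤ r) :
    (a - b) ^ r ≤ a ^ r - b * a ^ (r - 1) := by
  have hrne : r ≠ 0 := by linarith
  rcases eq_or_lt_of_le (hb.trans hba) with ha | ha
  · have hb0 : b = 0 := le_antisymm (ha ▸ hba) hb
    subst hb0
    simp [← ha, Real.zero_rpow hrne]
  · have key : a - b = a * (1 - b / a) := by field_simp
    have h01 : 0 ≤ 1 - b / a := by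
      rw [sub_nonneg, div_le_one ha]; exact hba
    rw [key, Real.mul_rpow ha.le h01]
    have h2 : (1 - b / a) ^ r ≤ 1 - b / a := by
      rcases eq_or_lt_of_le h01 with h0 | h0
      · rw [← h0, Real.zero_rpow hrne]
      · calc (1 - b / a) ^ r ≤ (1 - b / a) ^ (1 : ℝ) := by
              apply Real.rpow_le_rpow_of_exponent_ge h0 _ hr
              have : 0 ≤ b / a := div_nonneg hb ha.le
              linarith
          _ = 1 - b / a := Real.rpow_one _
    have h3 : a ^ r * (1 - b / a) = a ^ r - b * a ^ (r - 1) := by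
      rw [Real.rpow_sub_one ha.ne']
      field_simp
    calc a ^ r * (1 - b / a) ^ r ≤ a ^ r * (1 - b / a) :=
          mul_le_mul_of_nonneg_left h2 (Real.rpow_nonneg ha.le r)
      _ = _ := h3

private lemma aux_rpow_concave {c p : ℝ} (hc0 : 0 ≤ c) (hc1 : c ≤ 1) (hp : 1 < p) :
    (1 - c) ^ (1 / p) ≤ 1 - p⁻¹ * c := by
  have hp0 : (0 : ℝ) < p := by linarith
  have h := rpow_one_add_le_one_add_mul_self (s := -c) (by linarith) (p := 1 / p)
      (by positivity) (by rw [div_le_one hp0]; linarith)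
  have e : (1 : ℝ) + -c = 1 - c := by ring
  rw [e] at h
  calc (1 - c) ^ (1 / p) ≤ 1 + 1 / p * -c := h
    _ = 1 - p⁻¹ * c := by ring

open Classical in
/-- For `1 < q < p < ∞` and nonzero `x ∈ f_{p,q}` with `‖x‖ = 1`, and any dyadic
rectangle `I₀`: `dist(x, span{e_{I₀}}) ≤ 1 − p⁻¹ |F_x(e_{I₀})|^{q'}`, where
`|F_x(e_{I₀})| = |x_{I₀}|^{q−1} |I₀|^{−q/p} ∫_{I₀} (S_q x)^{p−q}`. -/
theorem stmt_16 {d : ℕ} {𝕜 : Type*} [RCLike 𝕜] (p q q' : ℝ) (hq : 1 < q) (hqp : q < p)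
    (hq' : 1 / q + 1 / q' = 1)
    (x : DyadicRect d → 𝕜) (hx : x ≠ 0) (hxnorm : fpqNorm p q x = 1)
    (hx1 : ∀ u, Summable fun I => (‖x I‖ * DyadicRect.indp p I u) ^ q)
    (hx2 : MeasureTheory.Integrable fun u => Sq p q x u ^ p)
    (I₀ : DyadicRect d) :
    (⨅ lam : 𝕜, fpqNorm p q fun I => x I - if I = I₀ then lam else 0) ≤
      1 - p⁻¹ * (‖x I₀‖ ^ (q - 1) * I₀.vol ^ (-(q / p)) *
        ∫ u in I₀.toSet, Sq p q x u ^ (p - q)) ^ q' := by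
  have hp1 : 1 < p := hq.trans hqp
  have hp0 : (0 : ℝ) < p := by linarith
  have hq0 : (0 : ℝ) < q := by linarith
  have hpq0 : (0 : ℝ) < p - q := by linarith
  have hqne : q ≠ 0 := ne_of_gt hq0
  -- facts about q'
  have hq'ne : q' ≠ 0 := by
    intro h
    rw [h, div_zero, add_zero, div_eq_one_iff_eq hqne] at hq'
    linarith
  have h1q' : 1 / q' = 1 - 1 / q := by linarith
  have hq'pos : 0 < q' := by
    have h1 : 0 < 1 / q' := by
      rw [h1q']
      have : 1 / q < 1 := by rw [div_lt_one hq0]; exact hq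
      linarith
    exact one_div_pos.mp h1
  have hq'gt1 : 1 < q' := by
    have h1 : 1 / q' < 1 := by
      rw [h1q']
      have : 0 < 1 / q := by positivity
      linarith
    have := (div_lt_one hq'pos).mp h1
    exact this
  have hq'mul : (q - 1) * q' = q := by
    have key : q' + q = q * q' := by
      field_simp at hq'
      linarith
    nlinarith [key]
  -- facts about the rectangle
  have hIset : I₀.toSet = Set.pi Set.univ
      (fun i => Set.Ico ((I₀.k i : ℝ) / 2 ^ I₀.j i) (((I₀.k i : ℝ) + 1) / 2 ^ I₀.j i)) := by
    ext u
    simp [DyadicRect.toSet, Set.mem_pi]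
  have hImeas : MeasurableSet I₀.toSet := by
    rw [hIset]
    exact MeasurableSet.univ_pi (fun i => measurableSet_Ico)
  have hvolpos : 0 < I₀.vol := Finset.prod_pos (fun i _ => by positivity)
  have hμI : volume I₀.toSet = ENNReal.ofReal I₀.vol := by
    rw [hIset, volume_pi_pi]
    simp only [Real.volume_Ico]
    rw [DyadicRect.vol, ← ENNReal.ofReal_prod_of_nonneg (fun i _ => by
      have h2 : (0:ℝ) < 2 ^ I₀.j i := by positivity
      rw [sub_nonneg]
      gcongr
      linarith)]
    congr 1
    apply Finset.prod_congr rfl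
    intro i _
    have h2 : (0:ℝ) < 2 ^ I₀.j i := by positivity
    field_simp
    ring
  -- indicator facts
  set χ : (Fin d → ℝ) → ℝ := I₀.toSet.indicator (fun _ => (1 : ℝ)) with hχ
  have hχmeas : Measurable χ := measurable_const.indicator hImeas
  have hχnn : ∀ u, 0 ≤ χ u := fun u => Set.indicator_nonneg (fun _ _ => zero_le_one) u
  have hχint : Integrable χ := by
    rw [hχ]
    refine (integrable_indicator_iff hImeas).2 ?_
    refine integrableOn_const ?_
    rw [hμI]
    exact ENNReal.ofReal_ne_top
  have hχval : ∫ u, χ u = I₀.vol := by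
    rw [hχ, integral_indicator_const (1 : ℝ) hImeas, measureReal_def, hμI,
      ENNReal.toReal_ofReal hvolpos.le, smul_eq_mul, mul_one]
  -- nonnegativity facts
  have hindnn : ∀ (J : DyadicRect d) u, 0 ≤ DyadicRect.indp p J u := by
    intro J u
    refine mul_nonneg (Real.rpow_nonneg ?_ _) (Set.indicator_nonneg (fun _ _ => zero_le_one) u)
    exact Finset.prod_nonneg (fun i _ => by positivity)
  have htermnn : ∀ (J : DyadicRect d) u, 0 ≤ (‖x J‖ * DyadicRect.indp p J u) ^ q :=
    fun J u => Real.rpow_nonneg (mul_nonneg (norm_nonneg _) (hindnn J u)) q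
  set S : (Fin d → ℝ) → ℝ := Sq p q x with hS
  have hS0 : ∀ u, 0 ≤ S u :=
    fun u => Real.rpow_nonneg (tsum_nonneg (fun J => htermnn J u)) _
  have hg : ∀ u, S u ^ q = ∑' I, (‖x I‖ * DyadicRect.indp p I u) ^ q := by
    intro u
    have h0 : 0 ≤ ∑' I, (‖x I‖ * DyadicRect.indp p I u) ^ q :=
      tsum_nonneg (fun J => htermnn J u)
    rw [hS]
    show ((∑' I, (‖x I‖ * DyadicRect.indp p I u) ^ q) ^ (1 / q)) ^ q = _
    rw [← Real.rpow_mul h0, one_div, inv_mul_cancel₀ hqne, Real.rpow_one]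
  -- the subtracted term
  set t : (Fin d → ℝ) → ℝ := fun u => (‖x I₀‖ * DyadicRect.indp p I₀ u) ^ q with ht
  have ht0 : ∀ u, 0 ≤ t u := fun u => htermnn I₀ u
  have htle : ∀ u, t u ≤ S u ^ q := by
    intro u
    rw [hg u]
    exact Summable.le_tsum (hx1 u) I₀ (fun J _ => htermnn J u)
  have hteq : ∀ u, t u = (‖x I₀‖ ^ q * I₀.vol ^ (-(q / p))) * χ u := by
    intro u
    rw [ht]
    show (‖x I₀‖ * DyadicRect.indp p I₀ u) ^ q = _
    rw [DyadicRect.indp]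
    by_cases hu : u ∈ I₀.toSet
    · rw [hχ]
      simp only [Set.indicator_of_mem hu, mul_one]
      rw [Real.mul_rpow (norm_nonneg _) (Real.rpow_nonneg hvolpos.le _),
        ← Real.rpow_mul hvolpos.le]
      congr 2
      ring
    · rw [hχ]
      simp only [Set.indicator_of_notMem hu, mul_zero, Real.zero_rpow hqne]
  -- the perturbed sequence
  set y : DyadicRect d → 𝕜 := fun I => x I - if I = I₀ then x I₀ else 0 with hy
  have hySq : ∀ u, Sq p q y u = (S u ^ q - t u) ^ (1 / q) := by
    intro u
    show (∑' I, (‖y I‖ * DyadicRect.indp p I u) ^ q) ^ (1 / q) = _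
    congr 1
    have hterm : ∀ J, (‖y J‖ * DyadicRect.indp p J u) ^ q =
        if J = I₀ then 0 else (‖x J‖ * DyadicRect.indp p J u) ^ q := by
      intro J
      by_cases hJ : J = I₀
      · subst hJ
        simp [hy, Real.zero_rpow hqne]
      · simp [hy, hJ]
    rw [tsum_congr hterm]
    have h := Summable.tsum_eq_add_tsum_ite (hx1 u) I₀
    rw [hg u, h, ht]
    ring
  have hyS0 : ∀ u, 0 ≤ Sq p q y u := by
    intro u
    rw [hySq u]
    exact Real.rpow_nonneg (by linarith [htle u]) _
  have hyS_le : ∀ u, Sq p q y u ≤ S u := by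
    intro u
    rw [hySq u]
    calc (S u ^ q - t u) ^ (1 / q) ≤ (S u ^ q) ^ (1 / q) :=
          Real.rpow_le_rpow (by linarith [htle u]) (by linarith [ht0 u]) (by positivity)
      _ = S u := by
          rw [← Real.rpow_mul (hS0 u), mul_one_div, div_self hqne, Real.rpow_one]
  -- measurability
  have hS_am : AEMeasurable S volume := by
    have he : S = fun u => (S u ^ p) ^ p⁻¹ := by
      funext u
      rw [← Real.rpow_mul (hS0 u), mul_inv_cancel₀ hp0.ne', Real.rpow_one]
    rw [he]
    exact hx2.aestronglyMeasurable.aemeasurable.pow_const _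
  have hSpq_am : AEMeasurable (fun u => S u ^ (p - q)) volume := hS_am.pow_const _
  have ht_meas : Measurable t := by
    have : t = fun u => (‖x I₀‖ ^ q * I₀.vol ^ (-(q / p))) * χ u := funext hteq
    rw [this]
    exact hχmeas.const_mul _
  -- integrability
  have hI1 : Integrable (fun u => S u ^ (p - q) * χ u) := by
    refine Integrable.mono' (hχint.add hx2) ?_ ?_
    · exact (hSpq_am.mul hχmeas.aemeasurable).aestronglyMeasurable
    · filter_upwards with u
      rw [Real.norm_eq_abs, abs_of_nonneg (mul_nonneg (Real.rpow_nonneg (hS0 u) _) (hχnn u))]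
      have hSp : 0 ≤ S u ^ p := Real.rpow_nonneg (hS0 u) p
      by_cases hu : u ∈ I₀.toSet
      · have hχu : χ u = 1 := by rw [hχ]; exact Set.indicator_of_mem hu _
        rw [hχu, mul_one]
        rcases le_or_gt (S u) 1 with h | h
        · have h1 : S u ^ (p - q) ≤ 1 := Real.rpow_le_one (hS0 u) h hpq0.le
          show S u ^ (p - q) ≤ χ u + S u ^ p
          rw [hχu]; linarith
        · have h1 : S u ^ (p - q) ≤ S u ^ p :=
            Real.rpow_le_rpow_of_exponent_le h.le (by linarith)
          show S u ^ (p - q) ≤ χ u + S u ^ p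
          rw [hχu]; linarith
      · have hχu : χ u = 0 := by rw [hχ]; exact Set.indicator_of_notMem hu _
        rw [hχu, mul_zero]
        show (0:ℝ) ≤ χ u + S u ^ p
        rw [hχu]; linarith
  have hty_int : Integrable (fun u => t u * S u ^ (p - q)) := by
    have he : (fun u => t u * S u ^ (p - q)) =
        fun u => (‖x I₀‖ ^ q * I₀.vol ^ (-(q / p))) * (S u ^ (p - q) * χ u) := by
      funext u
      rw [hteq u]
      ring
    rw [he]
    exact hI1.const_mul _
  have hyp_int : Integrable (fun u => Sq p q y u ^ p) := by
    refine Integrable.mono' hx2 ?_ ?_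
    · have he : (fun u => Sq p q y u ^ p) = fun u => ((S u ^ q - t u) ^ (1 / q)) ^ p := by
        funext u
        rw [hySq u]
      rw [he]
      exact ((((hS_am.pow_const q).sub ht_meas.aemeasurable).pow_const _).pow_const
        _).aestronglyMeasurable
    · filter_upwards with u
      rw [Real.norm_eq_abs, abs_of_nonneg (Real.rpow_nonneg (hyS0 u) p)]
      exact Real.rpow_le_rpow (hyS0 u) (hyS_le u) hp0.le
  -- value of the norm integral
  have hSint0 : 0 ≤ ∫ u, S u ^ p := integral_nonneg (fun u => Real.rpow_nonneg (hS0 u) p)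
  have hint1 : ∫ u, S u ^ p = 1 := by
    have hxn : (∫ u, S u ^ p) ^ (1 / p) = 1 := hxnorm
    calc ∫ u, S u ^ p = ((∫ u, S u ^ p) ^ (1 / p)) ^ p := by
          rw [← Real.rpow_mul hSint0, one_div_mul_cancel hp0.ne', Real.rpow_one]
      _ = 1 := by rw [hxn, Real.one_rpow]
  -- key pointwise estimate
  have hkey : ∀ u, Sq p q y u ^ p ≤ S u ^ p - t u * S u ^ (p - q) := by
    intro u
    have h1 : Sq p q y u ^ p = (S u ^ q - t u) ^ (p / q) := by
      rw [hySq u, ← Real.rpow_mul (by linarith [htle u] : (0:ℝ) ≤ S u ^ q - t u)]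
      congr 1
      field_simp
    rw [h1]
    have h2 := aux_rpow_sub (S u ^ q) (t u) (p / q) (ht0 u) (htle u)
      (by rw [le_div_iff₀ hq0]; linarith)
    have e1 : (S u ^ q) ^ (p / q) = S u ^ p := by
      rw [← Real.rpow_mul (hS0 u)]
      congr 1
      field_simp
    have e2 : (S u ^ q) ^ (p / q - 1) = S u ^ (p - q) := by
      rw [← Real.rpow_mul (hS0 u)]
      congr 1
      field_simp
    rw [e1, e2] at h2
    exact h2
  have hmain : ∫ u, Sq p q y u ^ p ≤ 1 - ∫ u, t u * S u ^ (p - q) := by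
    have h := integral_mono hyp_int (hx2.sub hty_int) hkey
    simp only [Pi.sub_apply] at h
    rwa [integral_sub hx2 hty_int, hint1] at h
  -- the quantities K and B
  set K := ∫ u in I₀.toSet, S u ^ (p - q) with hK
  have hKeq : ∫ u, S u ^ (p - q) * χ u = K := by
    rw [hK, ← integral_indicator hImeas]
    congr 1
    funext u
    by_cases hu : u ∈ I₀.toSet <;>
      simp [hχ, Set.indicator, hu]
  have hK0 : 0 ≤ K :=
    setIntegral_nonneg hImeas (fun u _ => Real.rpow_nonneg (hS0 u) _)
  set B := I₀.vol ^ (-(q / p)) * K with hB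
  have hB0 : 0 ≤ B := mul_nonneg (Real.rpow_nonneg hvolpos.le _) hK0
  have htyval : ∫ u, t u * S u ^ (p - q) = ‖x I₀‖ ^ q * B := by
    have he : (fun u => t u * S u ^ (p - q)) =
        fun u => (‖x I₀‖ ^ q * I₀.vol ^ (-(q / p))) * (S u ^ (p - q) * χ u) := by
      funext u
      rw [hteq u]
      ring
    rw [he, integral_const_mul, hKeq, hB]
    ring
  -- Hölder: B ≤ 1
  have hB1 : B ≤ 1 := by
    have hconj : Real.HolderConjugate (p / (p - q)) (p / q) := by
      rw [Real.holderConjugate_iff]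
      constructor
      · rw [lt_div_iff₀ hpq0]
        linarith
      · rw [← one_div, ← one_div, one_div_div, one_div_div, ← add_div,
          sub_add_cancel, div_self hp0.ne']
    set F : (Fin d → ℝ) → ENNReal := fun u => ENNReal.ofReal (S u ^ (p - q)) with hF
    set G : (Fin d → ℝ) → ENNReal := fun u => ENNReal.ofReal (I₀.vol ^ (-(q / p)) * χ u) with hG
    have hF_am : AEMeasurable F volume := hSpq_am.ennreal_ofReal
    have hG_am : AEMeasurable G volume := ((hχmeas.const_mul _).ennreal_ofReal).aemeasurable
    have hHolder := ENNReal.lintegral_mul_le_Lp_mul_Lq volume hconj hF_am hG_am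
    have hFp : ∫⁻ u, F u ^ (p / (p - q)) = 1 := by
      have he : ∀ u, F u ^ (p / (p - q)) = ENNReal.ofReal (S u ^ p) := by
        intro u
        show ENNReal.ofReal (S u ^ (p - q)) ^ (p / (p - q)) = _
        rw [ENNReal.ofReal_rpow_of_nonneg (Real.rpow_nonneg (hS0 u) _) (by positivity)]
        congr 1
        rw [← Real.rpow_mul (hS0 u)]
        congr 1
        field_simp
      rw [lintegral_congr he,
        ← ofReal_integral_eq_lintegral_ofReal hx2
          (Filter.Eventually.of_forall (fun u => Real.rpow_nonneg (hS0 u) p)),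
        hint1, ENNReal.ofReal_one]
    have hGq : ∫⁻ u, G u ^ (p / q) = 1 := by
      have he : ∀ u, G u ^ (p / q) = ENNReal.ofReal (I₀.vol⁻¹ * χ u) := by
        intro u
        show ENNReal.ofReal (I₀.vol ^ (-(q / p)) * χ u) ^ (p / q) = _
        rw [ENNReal.ofReal_rpow_of_nonneg
          (mul_nonneg (Real.rpow_nonneg hvolpos.le _) (hχnn u)) (by positivity)]
        congr 1
        by_cases hu : u ∈ I₀.toSet
        · have hχu : χ u = 1 := by rw [hχ]; exact Set.indicator_of_mem hu _
          rw [hχu, mul_one, mul_one, ← Real.rpow_mul hvolpos.le]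
          rw [show -(q / p) * (p / q) = -1 by field_simp, Real.rpow_neg_one]
        · have hχu : χ u = 0 := by rw [hχ]; exact Set.indicator_of_notMem hu _
          rw [hχu, mul_zero, mul_zero, Real.zero_rpow (by positivity : p / q ≠ 0)]
      rw [lintegral_congr he,
        ← ofReal_integral_eq_lintegral_ofReal (hχint.const_mul _)
          (Filter.Eventually.of_forall (fun u => mul_nonneg (inv_nonneg.2 hvolpos.le) (hχnn u))),
        integral_const_mul, hχval, inv_mul_cancel₀ hvolpos.ne', ENNReal.ofReal_one]
    have hBint : Integrable (fun u => I₀.vol ^ (-(q / p)) * (S u ^ (p - q) * χ u)) :=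
      hI1.const_mul _
    have hBlint : ENNReal.ofReal B = ∫⁻ u, (F * G) u := by
      have e1 : B = ∫ u, I₀.vol ^ (-(q / p)) * (S u ^ (p - q) * χ u) := by
        rw [integral_const_mul, hKeq, hB]
      rw [e1, ofReal_integral_eq_lintegral_ofReal hBint
        (Filter.Eventually.of_forall (fun u =>
          mul_nonneg (Real.rpow_nonneg hvolpos.le _)
            (mul_nonneg (Real.rpow_nonneg (hS0 u) _) (hχnn u))))]
      apply lintegral_congr
      intro u
      rw [Pi.mul_apply, hF, hG,
        ← ENNReal.ofReal_mul (Real.rpow_nonneg (hS0 u) _)]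
      congr 1
      ring
    have hle : ENNReal.ofReal B ≤ 1 := by
      rw [hBlint]
      calc ∫⁻ u, (F * G) u ≤ (∫⁻ u, F u ^ (p / (p - q))) ^ (1 / (p / (p - q))) *
            (∫⁻ u, G u ^ (p / q)) ^ (1 / (p / q)) := hHolder
        _ = 1 := by rw [hFp, hGq, ENNReal.one_rpow, ENNReal.one_rpow, mul_one]
    exact ENNReal.ofReal_le_one.mp hle
  -- assembling the estimate
  set c := ‖x I₀‖ ^ q * B with hc
  have hc0 : 0 ≤ c := mul_nonneg (Real.rpow_nonneg (norm_nonneg _) q) hB0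
  have hyint0 : 0 ≤ ∫ u, Sq p q y u ^ p :=
    integral_nonneg (fun u => Real.rpow_nonneg (hyS0 u) p)
  rw [htyval] at hmain
  have hc1 : c ≤ 1 := by linarith
  have hnorm_y : fpqNorm p q y ≤ 1 - p⁻¹ * c := by
    show (∫ u, Sq p q y u ^ p) ^ (1 / p) ≤ 1 - p⁻¹ * c
    calc (∫ u, Sq p q y u ^ p) ^ (1 / p) ≤ (1 - c) ^ (1 / p) :=
          Real.rpow_le_rpow hyint0 (by linarith) (by positivity)
      _ ≤ 1 - p⁻¹ * c := aux_rpow_concave hc0 hc1 hp1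
  have hA : ‖x I₀‖ ^ (q - 1) * I₀.vol ^ (-(q / p)) * K = ‖x I₀‖ ^ (q - 1) * B := by
    rw [hB]; ring
  have hAq' : (‖x I₀‖ ^ (q - 1) * B) ^ q' ≤ c := by
    rw [Real.mul_rpow (Real.rpow_nonneg (norm_nonneg _) _) hB0,
      ← Real.rpow_mul (norm_nonneg _), hq'mul, hc]
    refine mul_le_mul_of_nonneg_left ?_ (Real.rpow_nonneg (norm_nonneg _) q)
    rcases eq_or_lt_of_le hB0 with h0 | h0
    · rw [← h0, Real.zero_rpow hq'ne]
    · calc B ^ q' ≤ B ^ (1 : ℝ) :=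
            Real.rpow_le_rpow_of_exponent_ge h0 hB1 hq'gt1.le
        _ = B := Real.rpow_one B
  have hfinal : fpqNorm p q y ≤
      1 - p⁻¹ * (‖x I₀‖ ^ (q - 1) * I₀.vol ^ (-(q / p)) * K) ^ q' := by
    rw [hA]
    have hpinv : (0:ℝ) ≤ p⁻¹ := by positivity
    calc fpqNorm p q y ≤ 1 - p⁻¹ * c := hnorm_y
      _ ≤ 1 - p⁻¹ * (‖x I₀‖ ^ (q - 1) * B) ^ q' :=
          sub_le_sub_left (mul_le_mul_of_nonneg_left hAq' hpinv) 1
  refine le_trans (ciInf_le ?_ (x I₀)) hfinal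
  refine ⟨0, ?_⟩
  rintro r ⟨lam, rfl⟩
  exact Real.rpow_nonneg
    (integral_nonneg (fun u => Real.rpow_nonneg
      (Real.rpow_nonneg (tsum_nonneg (fun J => Real.rpow_nonneg
        (mul_nonneg (norm_nonneg _) (hindnn J u)) q)) _) p)) _
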